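/- In dimension 2, the map problem is not equivalent to L² projection of the barycentric projection: take μ = (2/3)δ_{(0,0)} + (1/3)δ_{(1,0)} and ν = (2/3)δ_{(0,0)} + (1/3)δ_{(-1,10)}, and let G be the class of continuous monotone maps g: ℝ² → ℝ² (i.e., ⟨g(x)−g(y), x−y⟩ ≥ 0 for all x, y). Then the unique (in L²(μ)) minimiser of ‖g − π̄*‖_{L²(μ)} over G is π̄* itself, where π* is the unique quadratic-cost optimal plan, and W₂²(π̄*#μ, ν) = 101/6, whereas the monotone map g with g(0,0) = (0,0), g(1,0) = (0,10) satisfies W₂²(g#μ, ν) = 1/3 < 101/6. Hence argmin_{g∈G} W₂²(g#μ, ν) ≠ argmin_{g∈G} ‖g − π̄*‖_{L²(μ)}. -/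

import Mathlib

open Set MeasureTheory
open scoped ENNReal

/-- Squared 2-Wasserstein cost between measures on ℝ², with the squared
Euclidean ground cost. -/
noncomputable def W2sq2 (ρ₁ ρ₂ : MeasureTheory.Measure (ℝ × ℝ)) : ℝ≥0∞ :=
  ⨅ π ∈ {π : MeasureTheory.Measure ((ℝ × ℝ) × (ℝ × ℝ)) |
      π.map Prod.fst = ρ₁ ∧ π.map Prod.snd = ρ₂},
    ∫⁻ q, ENNReal.ofReal ((q.1.1 - q.2.1) ^ 2 + (q.1.2 - q.2.2) ^ 2) ∂π

/-- A map g : ℝ² → ℝ² is monotone if ⟨g(x) − g(y), x − y⟩ ≥ 0 for all x, y. -/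
def MonotoneMap2 (g : ℝ × ℝ → ℝ × ℝ) : Prop :=
  ∀ x y : ℝ × ℝ,
    0 ≤ (g x - g y).1 * (x - y).1 + (g x - g y).2 * (x - y).2

/-- Source measure μ = (2/3)δ₍₀,₀₎ + (1/3)δ₍₁,₀₎. -/
noncomputable def muCE : MeasureTheory.Measure (ℝ × ℝ) :=
  (2 / 3 : ℝ≥0∞) • MeasureTheory.Measure.dirac ((0:ℝ), (0:ℝ)) +
  (1 / 3 : ℝ≥0∞) • MeasureTheory.Measure.dirac ((1:ℝ), (0:ℝ))

/-- Target measure ν = (2/3)δ₍₀,₀₎ + (1/3)δ₍₋₁,₁₀₎. -/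
noncomputable def nuCE : MeasureTheory.Measure (ℝ × ℝ) :=
  (2 / 3 : ℝ≥0∞) • MeasureTheory.Measure.dirac ((0:ℝ), (0:ℝ)) +
  (1 / 3 : ℝ≥0∞) • MeasureTheory.Measure.dirac ((-1:ℝ), (10:ℝ))

/-- The barycentric projection π̄* of the unique quadratic-cost optimal plan
between μ and ν: π̄*(0,0) = (-1/2, 5) and π̄*(1,0) = (0,0). -/
noncomputable def barCE : ℝ × ℝ → ℝ × ℝ := fun x =>
  if x = ((1:ℝ), (0:ℝ)) then ((0:ℝ), (0:ℝ)) else ((-(1/2) : ℝ), (5:ℝ))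

/-- The L²(μ) distance to the barycentric projection. -/
noncomputable def L2distSq (g : ℝ × ℝ → ℝ × ℝ) : ℝ :=
  ∫ x, ((g x - barCE x).1 ^ 2 + (g x - barCE x).2 ^ 2) ∂muCE

/-!
Both objectives see a map only through its values at the two atoms of `μ`. The `L²(μ)` distance
to `π̄*` vanishes exactly at maps agreeing with `π̄*` there, and an affine map with positive
semidefinite symmetric linear part does so while being continuous and monotone; so the
`L²`-minimisers over `G` are the maps equal to `π̄*` on the support of `μ`.

Each Wasserstein value is computed from a coupling whose cost equals the lower bound
`ρ₁{x} · dist(x, supp ν)²`: under `π̄*#μ` the mass `2/3` at `(-1/2, 5)` is at squared distance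
`101/4` from both atoms of `ν`, whereas the rotation `x ↦ 10 J x` only moves the mass `1/3` at
`(0, 10)`, at squared distance `1` from `(-1, 10)`.
-/

def sqDist (x y : ℝ × ℝ) : ℝ := (x.1 - y.1) ^ 2 + (x.2 - y.2) ^ 2

lemma sqDist_nonneg (x y : ℝ × ℝ) : 0 ≤ sqDist x y := by
  unfold sqDist; positivity

lemma sqDist_eq_zero_iff {x y : ℝ × ℝ} : sqDist x y = 0 ↔ x = y := by
  simp only [sqDist, Prod.ext_iff]
  constructor
  · intro h
    constructor <;> nlinarith [sq_nonneg (x.1 - y.1), sq_nonneg (x.2 - y.2)]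
  · rintro ⟨h₁, h₂⟩
    simp [h₁, h₂]

section TwoAtoms

variable {α : Type*} [MeasurableSpace α]

lemma integral_smul_dirac_add_smul_dirac [MeasurableSingletonClass α] {E : Type*}
    [NormedAddCommGroup E] [NormedSpace ℝ E] [CompleteSpace E] {a b : ℝ≥0∞}
    (ha : a ≠ ∞) (hb : b ≠ ∞) (x y : α) (f : α → E) :
    ∫ z, f z ∂(a • Measure.dirac x + b • Measure.dirac y) = a.toReal • f x + b.toReal • f y := by
  rw [integral_add_measure ((integrable_dirac (by simp)).smul_measure ha)
      ((integrable_dirac (by simp)).smul_measure hb),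
    integral_smul_measure, integral_smul_measure, integral_dirac, integral_dirac]

lemma map_smul_dirac_add_smul_dirac {β : Type*} [MeasurableSpace β] {f : α → β}
    (hf : Measurable f) (a b : ℝ≥0∞) (x y : α) :
    (a • Measure.dirac x + b • Measure.dirac y).map f =
      a • Measure.dirac (f x) + b • Measure.dirac (f y) := by
  rw [Measure.map_add _ _ hf, Measure.map_smul, Measure.map_smul,
    Measure.map_dirac' hf, Measure.map_dirac' hf]

lemma smul_dirac_add_smul_dirac_apply_compl_pair [MeasurableSingletonClass α] (a b : ℝ≥0∞)
    (x y : α) : (a • Measure.dirac x + b • Measure.dirac y) {x, y}ᶜ = 0 := by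
  simp [Measure.dirac_apply' _ ((measurableSet_singleton y).insert x).compl]

end TwoAtoms

section Wasserstein

variable {ρ₁ ρ₂ : Measure (ℝ × ℝ)}

lemma W2sq2_le_lintegral (π : Measure ((ℝ × ℝ) × (ℝ × ℝ)))
    (h₁ : π.map Prod.fst = ρ₁) (h₂ : π.map Prod.snd = ρ₂) :
    W2sq2 ρ₁ ρ₂ ≤ ∫⁻ q, ENNReal.ofReal (sqDist q.1 q.2) ∂π :=
  iInf₂_le π ⟨h₁, h₂⟩

lemma measure_singleton_mul_le_W2sq2 {S : Set (ℝ × ℝ)} (hS : MeasurableSet S)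
    (hρ₂ : ρ₂ Sᶜ = 0) (x : ℝ × ℝ) {m : ℝ} (hm : ∀ y ∈ S, m ≤ sqDist x y) :
    ρ₁ {x} * ENNReal.ofReal m ≤ W2sq2 ρ₁ ρ₂ := by
  refine le_iInf₂ fun π ⟨h₁, h₂⟩ => ?_
  have hsnd : ∀ᵐ q ∂π, q.2 ∈ S := by
    rw [ae_iff, ← hρ₂, ← h₂, Measure.map_apply measurable_snd hS.compl]
    rfl
  calc ρ₁ {x} * ENNReal.ofReal m
      = ∫⁻ z, ({x} : Set (ℝ × ℝ)).indicator (fun _ => ENNReal.ofReal m) z ∂ρ₁ := by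
        rw [lintegral_indicator_const (measurableSet_singleton x), mul_comm]
    _ = ∫⁻ q, ({x} : Set (ℝ × ℝ)).indicator (fun _ => ENNReal.ofReal m) q.1 ∂π := by
        rw [← h₁, lintegral_map (measurable_const.indicator (measurableSet_singleton x))
          measurable_fst]
    _ ≤ ∫⁻ q, ENNReal.ofReal (sqDist q.1 q.2) ∂π := by
        refine lintegral_mono_ae (hsnd.mono fun q hq => ?_)
        rcases eq_or_ne q.1 x with h | h
        · rw [indicator_of_mem (mem_singleton_iff.mpr h)]
          exact ENNReal.ofReal_le_ofReal (h ▸ hm q.2 hq)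
        · simp [h]

lemma W2sq2_eq_of_lintegral_le (π : Measure ((ℝ × ℝ) × (ℝ × ℝ)))
    (h₁ : π.map Prod.fst = ρ₁) (h₂ : π.map Prod.snd = ρ₂) {S : Set (ℝ × ℝ)}
    (hS : MeasurableSet S) (hρ₂ : ρ₂ Sᶜ = 0) (x : ℝ × ℝ) {m : ℝ}
    (hm : ∀ y ∈ S, m ≤ sqDist x y)
    (hπ : ∫⁻ q, ENNReal.ofReal (sqDist q.1 q.2) ∂π ≤ ρ₁ {x} * ENNReal.ofReal m) :
    W2sq2 ρ₁ ρ₂ = ρ₁ {x} * ENNReal.ofReal m :=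
  le_antisymm ((W2sq2_le_lintegral π h₁ h₂).trans hπ)
    (measure_singleton_mul_le_W2sq2 hS hρ₂ x hm)

end Wasserstein

lemma one_third_add_one_third : (1 / 3 + 1 / 3 : ℝ≥0∞) = 2 / 3 := by
  rw [ENNReal.div_add_div_same, one_add_one_eq_two]

lemma nuCE_compl_support : nuCE {(0, 0), (-1, 10)}ᶜ = 0 :=
  smul_dirac_add_smul_dirac_apply_compl_pair _ _ _ _

lemma map_muCE {g : ℝ × ℝ → ℝ × ℝ} (hg : Measurable g) :
    muCE.map g = (2 / 3 : ℝ≥0∞) • Measure.dirac (g (0, 0)) +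
      (1 / 3 : ℝ≥0∞) • Measure.dirac (g (1, 0)) :=
  map_smul_dirac_add_smul_dirac hg _ _ _ _

lemma measurable_barCE : Measurable barCE :=
  Measurable.ite measurableSet_eq measurable_const measurable_const

lemma barCE_zero_zero : barCE (0, 0) = (-(1 / 2), 5) := by
  simp [barCE, Prod.ext_iff]

lemma barCE_one_zero : barCE (1, 0) = (0, 0) := by
  simp [barCE]

lemma L2distSq_eq (g : ℝ × ℝ → ℝ × ℝ) :
    L2distSq g = 2 / 3 * sqDist (g (0, 0)) (-(1 / 2), 5) + 1 / 3 * sqDist (g (1, 0)) (0, 0) := by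
  rw [L2distSq, muCE, integral_smul_dirac_add_smul_dirac (by finiteness) (by finiteness),
    barCE_zero_zero, barCE_one_zero]
  simp [sqDist, ENNReal.toReal_div]

lemma L2distSq_nonneg (g : ℝ × ℝ → ℝ × ℝ) : 0 ≤ L2distSq g := by
  rw [L2distSq_eq]
  have := sqDist_nonneg (g (0, 0)) (-(1 / 2), 5)
  have := sqDist_nonneg (g (1, 0)) (0, 0)
  positivity

lemma L2distSq_eq_zero_iff {g : ℝ × ℝ → ℝ × ℝ} :
    L2distSq g = 0 ↔ g (0, 0) = (-(1 / 2), 5) ∧ g (1, 0) = (0, 0) := by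
  have h₀ := sqDist_nonneg (g (0, 0)) (-(1 / 2), 5)
  have h₁ := sqDist_nonneg (g (1, 0)) (0, 0)
  rw [L2distSq_eq, ← sqDist_eq_zero_iff, ← sqDist_eq_zero_iff]
  constructor
  · intro h
    constructor <;> linarith
  · rintro ⟨h₀, h₁⟩
    rw [h₀, h₁]
    norm_num

def continuousMonotoneMaps : Set (ℝ × ℝ → ℝ × ℝ) := {g | Continuous g ∧ MonotoneMap2 g}

/-- Its linear part `[[1/2, -5], [-5, 50]] = (1/2) v vᵀ`, `v = (1, -10)`, is positive
semidefinite. -/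
noncomputable def baryExt (p : ℝ × ℝ) : ℝ × ℝ := (p.1 / 2 - 5 * p.2 - 1 / 2, -5 * p.1 + 50 * p.2 + 5)

lemma baryExt_mem : baryExt ∈ continuousMonotoneMaps := by
  refine ⟨by unfold baryExt; fun_prop, fun x y => ?_⟩
  simp only [baryExt, Prod.fst_sub, Prod.snd_sub]
  nlinarith [sq_nonneg ((x.1 - y.1) - 10 * (x.2 - y.2))]

lemma baryExt_zero_zero : baryExt (0, 0) = (-(1 / 2), 5) := by norm_num [baryExt]

lemma baryExt_one_zero : baryExt (1, 0) = (0, 0) := by norm_num [baryExt]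

lemma map_baryExt_muCE : muCE.map baryExt = muCE.map barCE := by
  rw [map_muCE baryExt_mem.1.measurable, map_muCE measurable_barCE, baryExt_zero_zero,
    baryExt_one_zero, barCE_zero_zero, barCE_one_zero]

def scaledQuarterTurn (p : ℝ × ℝ) : ℝ × ℝ := (-10 * p.2, 10 * p.1)

lemma scaledQuarterTurn_mem : scaledQuarterTurn ∈ continuousMonotoneMaps := by
  refine ⟨by unfold scaledQuarterTurn; fun_prop, fun x y => ?_⟩
  simp only [scaledQuarterTurn, Prod.fst_sub, Prod.snd_sub]
  ring_nf
  exact le_rfl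

lemma scaledQuarterTurn_zero_zero : scaledQuarterTurn (0, 0) = (0, 0) := by
  norm_num [scaledQuarterTurn]

lemma scaledQuarterTurn_one_zero : scaledQuarterTurn (1, 0) = (0, 10) := by
  norm_num [scaledQuarterTurn]

lemma isMinOn_L2distSq_iff {g : ℝ × ℝ → ℝ × ℝ} :
    IsMinOn L2distSq continuousMonotoneMaps g ↔
      g (0, 0) = (-(1 / 2), 5) ∧ g (1, 0) = (0, 0) := by
  rw [← L2distSq_eq_zero_iff, isMinOn_iff]
  refine ⟨fun h => le_antisymm ?_ (L2distSq_nonneg g), fun h g' _ => h ▸ L2distSq_nonneg g'⟩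
  simpa [L2distSq_eq_zero_iff.mpr ⟨baryExt_zero_zero, baryExt_one_zero⟩] using h _ baryExt_mem

lemma W2sq2_map_barCE : W2sq2 (muCE.map barCE) nuCE = ENNReal.ofReal (101 / 6) := by
  set s : ℝ × ℝ := (-(1 / 2), 5)
  set o : ℝ × ℝ := (0, 0)
  set t : ℝ × ℝ := (-1, 10)
  let π := (1 / 3 : ℝ≥0∞) • Measure.dirac (s, t) + (1 / 3 : ℝ≥0∞) • Measure.dirac (s, o) +
    (1 / 3 : ℝ≥0∞) • Measure.dirac (o, o)
  have hmass : muCE.map barCE {s} = 2 / 3 := by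
    simp [map_muCE measurable_barCE, barCE_zero_zero, barCE_one_zero, s]
  rw [W2sq2_eq_of_lintegral_le π ?_ ?_ ((measurableSet_singleton t).insert o)
    nuCE_compl_support s (m := 101 / 4) ?_ ?_, hmass,
    ← ENNReal.ofReal_ofNat 2, ← ENNReal.ofReal_ofNat 3, ← ENNReal.ofReal_div_of_pos three_pos,
    ← ENNReal.ofReal_mul (by positivity)]
  · norm_num
  · simp only [π, Measure.map_add _ _ measurable_fst, Measure.map_smul,
      Measure.map_dirac' measurable_fst, map_muCE measurable_barCE, barCE_zero_zero,
      barCE_one_zero]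
    rw [← add_smul, one_third_add_one_third]
  · simp only [π, Measure.map_add _ _ measurable_snd, Measure.map_smul,
      Measure.map_dirac' measurable_snd]
    rw [add_assoc, ← add_smul, one_third_add_one_third, add_comm]
    rfl
  · rintro y (rfl | rfl) <;> norm_num [sqDist, s, o, t]
  · have hst : sqDist s t = 101 / 4 := by norm_num [sqDist, s, t]
    have hso : sqDist s o = 101 / 4 := by norm_num [sqDist, s, o]
    simp only [π, lintegral_add_measure, lintegral_smul_measure, lintegral_dirac, smul_eq_mul,
      hmass, hst, hso, sqDist_eq_zero_iff.mpr rfl, ENNReal.ofReal_zero, mul_zero, add_zero,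
      ← add_mul, one_third_add_one_third, le_rfl]

lemma W2sq2_map_scaledQuarterTurn :
    W2sq2 (muCE.map scaledQuarterTurn) nuCE = ENNReal.ofReal (1 / 3) := by
  set o : ℝ × ℝ := (0, 0)
  set u : ℝ × ℝ := (0, 10)
  set t : ℝ × ℝ := (-1, 10)
  have hmeas : Measurable scaledQuarterTurn := scaledQuarterTurn_mem.1.measurable
  have hou : o ≠ u := by norm_num [o, u]
  have hpush : muCE.map scaledQuarterTurn =
      (2 / 3 : ℝ≥0∞) • Measure.dirac o + (1 / 3 : ℝ≥0∞) • Measure.dirac u := by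
    rw [map_muCE hmeas, scaledQuarterTurn_zero_zero, scaledQuarterTurn_one_zero]
  let π := (2 / 3 : ℝ≥0∞) • Measure.dirac (o, o) + (1 / 3 : ℝ≥0∞) • Measure.dirac (u, t)
  have hmass : muCE.map scaledQuarterTurn {u} = 1 / 3 := by
    simp [hpush, hou]
  rw [W2sq2_eq_of_lintegral_le π ?_ ?_ ((measurableSet_singleton t).insert o)
    nuCE_compl_support u (m := 1) ?_ ?_, hmass, ENNReal.ofReal_one, mul_one,
    ENNReal.ofReal_div_of_pos three_pos]
  · simp
  · simp only [π, hpush, Measure.map_add _ _ measurable_fst, Measure.map_smul,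
      Measure.map_dirac' measurable_fst]
  · simp only [π, Measure.map_add _ _ measurable_snd, Measure.map_smul,
      Measure.map_dirac' measurable_snd]
    rfl
  · rintro y (rfl | rfl) <;> norm_num [sqDist, u, o, t]
  · have hut : sqDist u t = 1 := by norm_num [sqDist, u, t]
    simp only [π, lintegral_add_measure, lintegral_smul_measure, lintegral_dirac, smul_eq_mul,
      hmass, hut, sqDist_eq_zero_iff.mpr rfl, ENNReal.ofReal_zero, mul_zero, zero_add, le_rfl]

/-- In dimension 2, the map problem is not equivalent to the L² projection of
the barycentric projection: over the class G of continuous monotone maps, the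
minimiser of ‖g − π̄*‖_{L²(μ)} is π̄* itself (characterised by its values on the
support of μ), with W₂²(π̄*#μ, ν) = 101/6, while a monotone map g with
g(0,0) = (0,0), g(1,0) = (0,10) achieves W₂²(g#μ, ν) = 1/3 < 101/6; hence the
two argmin sets differ. -/
theorem two_dim_counterexample :
    (∀ g ∈ {g : ℝ × ℝ → ℝ × ℝ | Continuous g ∧ MonotoneMap2 g},
      ((∀ g' ∈ {g : ℝ × ℝ → ℝ × ℝ | Continuous g ∧ MonotoneMap2 g},
          L2distSq g ≤ L2distSq g') ↔
        (g ((0:ℝ), (0:ℝ)) = ((-(1/2) : ℝ), (5:ℝ)) ∧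
          g ((1:ℝ), (0:ℝ)) = ((0:ℝ), (0:ℝ))))) ∧
    W2sq2 (MeasureTheory.Measure.map barCE muCE) nuCE = ENNReal.ofReal (101 / 6) ∧
    (∃ g ∈ {g : ℝ × ℝ → ℝ × ℝ | Continuous g ∧ MonotoneMap2 g},
      g ((0:ℝ), (0:ℝ)) = ((0:ℝ), (0:ℝ)) ∧ g ((1:ℝ), (0:ℝ)) = ((0:ℝ), (10:ℝ)) ∧
      W2sq2 (MeasureTheory.Measure.map g muCE) nuCE = ENNReal.ofReal (1 / 3)) ∧
    {g | (Continuous g ∧ MonotoneMap2 g) ∧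
        ∀ g' ∈ {g : ℝ × ℝ → ℝ × ℝ | Continuous g ∧ MonotoneMap2 g},
          W2sq2 (MeasureTheory.Measure.map g muCE) nuCE ≤
            W2sq2 (MeasureTheory.Measure.map g' muCE) nuCE} ≠
    {g | (Continuous g ∧ MonotoneMap2 g) ∧
        ∀ g' ∈ {g : ℝ × ℝ → ℝ × ℝ | Continuous g ∧ MonotoneMap2 g},
          L2distSq g ≤ L2distSq g'} := by
  have hbary : IsMinOn L2distSq continuousMonotoneMaps baryExt :=
    isMinOn_L2distSq_iff.mpr ⟨baryExt_zero_zero, baryExt_one_zero⟩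
  refine ⟨fun g _ => isMinOn_iff.symm.trans isMinOn_L2distSq_iff, W2sq2_map_barCE,
    ⟨scaledQuarterTurn, scaledQuarterTurn_mem, scaledQuarterTurn_zero_zero,
      scaledQuarterTurn_one_zero, W2sq2_map_scaledQuarterTurn⟩, fun hargmin => ?_⟩
  have hW2 := ((Set.ext_iff.mp hargmin baryExt).mpr
    ⟨baryExt_mem, isMinOn_iff.mp hbary⟩).2 _ scaledQuarterTurn_mem
  rw [map_baryExt_muCE, W2sq2_map_barCE, W2sq2_map_scaledQuarterTurn,
    ENNReal.ofReal_le_ofReal_iff (by norm_num)] at hW2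
  norm_num at hW2
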